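/- arXiv:2511.03030 — 3 statements merged into one kernel-verified Lean document; each statement's English description precedes it below -/
import Mathlib

section
/- The set of Størmer numbers is infinite; that is, the set of natural numbers x₀ for which there exists a prime p ≡ 1 (mod 4) with 1 < x₀ ≤ (p-1)/2 and x₀² ≡ -1 (mod p) is an infinite set. -/
theorem stormer_numbers_infinite :
    {x₀ : ℕ | ∃ p : ℕ, p.Prime ∧ p % 4 = 1 ∧ 1 < x₀ ∧ x₀ ≤ (p - 1) / 2 ∧
      ((x₀ : ZMod p)) ^ 2 = -1}.Infinite := by
  apply Set.infinite_of_forall_exists_gt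
  intro n
  obtain ⟨p, hp, hnp, hmod⟩ := Nat.exists_prime_gt_modEq_one ((n + 2) ^ 2) (by norm_num : (4:ℕ) ≠ 0)
  have hp4 : p % 4 = 1 := by
    have := hmod
    unfold Nat.ModEq at this
    simpa using this
  haveI : Fact p.Prime := ⟨hp⟩
  have hp2 : p % 4 ≠ 3 := by omega
  obtain ⟨y, hy0'⟩ := (ZMod.exists_sq_eq_neg_one_iff (p := p)).2 hp2
  have hy : y ^ 2 = -1 := by rw [sq]; exact hy0'.symm
  -- x = min y.val (p - y.val)
  have h4 : 4 ≤ (n + 2) ^ 2 := by have := Nat.pow_le_pow_left (show 2 ≤ n + 2 by omega) 2; simpa using this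
  have hp5 : 5 ≤ p := by omega
  have hy0 : y ≠ 0 := by
    rintro rfl
    rw [zero_pow (by norm_num), eq_comm, neg_eq_zero] at hy
    exact one_ne_zero hy
  have hyval : y.val < p := y.val_lt
  have hyval0 : 0 < y.val := by
    rcases Nat.eq_zero_or_pos y.val with h | h
    · exact absurd ((ZMod.val_eq_zero y).mp h) hy0
    · exact h
  set x := min y.val (p - y.val) with hx
  have hxle : x ≤ (p - 1) / 2 := by
    rcases min_cases y.val (p - y.val) with ⟨h1, h2⟩ | ⟨h1, h2⟩ <;> omega
  have hxsq : ((x : ZMod p)) ^ 2 = -1 := by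
    rcases min_cases y.val (p - y.val) with ⟨h1, h2⟩ | ⟨h1, h2⟩
    · rw [hx, h1, ZMod.natCast_val, ZMod.cast_id]; exact hy
    · rw [hx, h1]
      have hc : ((p - y.val : ℕ) : ZMod p) = -y := by
        push_cast [Nat.cast_sub hyval.le]
        simp [ZMod.natCast_val]
      rw [hc, neg_sq, hy]
  -- p divides x^2 + 1
  have hdvd : p ∣ x ^ 2 + 1 := by
    have : ((x ^ 2 + 1 : ℕ) : ZMod p) = 0 := by push_cast [hxsq]; ring
    exact (ZMod.natCast_eq_zero_iff _ _).mp this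
  have hx0 : 0 < x := by omega
  have hxbig : n < x := by
    by_contra h
    push_neg at h
    have h1 : x ^ 2 + 1 < p := by nlinarith
    have h2 : 0 < x ^ 2 + 1 := by positivity
    have := Nat.le_of_dvd h2 hdvd
    omega
  have hx1 : 1 < x := by
    rcases Nat.lt_or_ge 1 x with h | h
    · exact h
    · have hx1' : x = 1 := by omega
      rw [hx1'] at hdvd
      have := Nat.le_of_dvd (by norm_num) hdvd
      omega
  exact ⟨x, ⟨p, hp, hp4, hx1, hxle, hxsq⟩, hxbig⟩
end

section
/- arctan(1/70) = −arctan(1/2) + 2·arctan(1/5) + arctan(1/12). -/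
theorem arctan_seventieth_eq :
    Real.arctan (1 / 70) =
      -Real.arctan (1 / 2) + 2 * Real.arctan (1 / 5) + Real.arctan (1 / 12) := by
  have h1 : Real.arctan (1/5) + Real.arctan (1/5) = Real.arctan (5/12) := by
    rw [Real.arctan_add (by norm_num)]; norm_num
  have h2 : Real.arctan (5/12) + Real.arctan (1/12) = Real.arctan (72/139) := by
    rw [Real.arctan_add (by norm_num)]; norm_num
  have h3 : Real.arctan (72/139) + Real.arctan (-(1/2)) = Real.arctan (1/70) := by
    rw [Real.arctan_add (by norm_num)]; norm_num
  rw [← h3, Real.arctan_neg, two_mul, ← h2, ← h1]; ring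
end

section
/- Størmer's 1896 identity: π/4 = 44·arctan(1/57) + 7·arctan(1/239) − 12·arctan(1/682) + 24·arctan(1/12943). -/
theorem stormer_1896_identity :
    Real.pi / 4 = 44 * Real.arctan (1 / 57) + 7 * Real.arctan (1 / 239)
      - 12 * Real.arctan (1 / 682) + 24 * Real.arctan (1 / 12943) := by
  have h1 : Real.arctan (1/57) + Real.arctan (1/57) = Real.arctan (57/1624) := by
    rw [Real.arctan_add (by norm_num)]; norm_num
  have h2 : Real.arctan (57/1624) + Real.arctan (57/1624) = Real.arctan (185136/2634127) := by
    rw [Real.arctan_add (by norm_num)]; norm_num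
  have h3 : Real.arctan (185136/2634127) + Real.arctan (185136/2634127) = Real.arctan (975343472544/6904349713633) := by
    rw [Real.arctan_add (by norm_num)]; norm_num
  have h4 : Real.arctan (975343472544/6904349713633) + Real.arctan (975343472544/6904349713633) = Real.arctan (13468224850705964395984704/46718750078709900624226753) := by
    rw [Real.arctan_add (by norm_num)]; norm_num
  have h5 : Real.arctan (13468224850705964395984704/46718750078709900624226753) + Real.arctan (13468224850705964395984704/46718750078709900624226753) = Real.arctan (1258437261608003827417436088483220732017476031172224/2001248528287782648828504442719364153615241358955393) := by
    rw [Real.arctan_add (by norm_num)]; norm_num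
  have h6 : Real.arctan (1258437261608003827417436088483220732017476031172224/2001248528287782648828504442719364153615241358955393) + Real.arctan (975343472544/6904349713633) = Real.arctan (10640595635812093274208646828162240882489154228903628756719959584/12589911134476702204914265862022701191154058383230041272491554913) := by
    rw [Real.arctan_add (by norm_num)]; norm_num
  have h7 : Real.arctan (10640595635812093274208646828162240882489154228903628756719959584/12589911134476702204914265862022701191154058383230041272491554913) + Real.arctan (185136/2634127) = Real.arctan (30359526048167280559520407768157953896794006114356905827076473489496336/31193467533294004448510308353153627192530554289520296713480255630772527) := by
    rw [Real.arctan_add (by norm_num)]; norm_num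
  have h8 : Real.arctan (1/239) + Real.arctan (1/239) = Real.arctan (239/28560) := by
    rw [Real.arctan_add (by norm_num)]; norm_num
  have h9 : Real.arctan (239/28560) + Real.arctan (239/28560) = Real.arctan (13651680/815616479) := by
    rw [Real.arctan_add (by norm_num)]; norm_num
  have h10 : Real.arctan (13651680/815616479) + Real.arctan (239/28560) = Real.arctan (584824319281/23290743888720) := by
    rw [Real.arctan_add (by norm_num)]; norm_num
  have h11 : Real.arctan (584824319281/23290743888720) + Real.arctan (1/239) = Real.arctan (163063756196879/5565902965084799) := by
    rw [Real.arctan_add (by norm_num)]; norm_num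
  have h12 : Real.arctan (1/12943) + Real.arctan (1/12943) = Real.arctan (12943/83760624) := by
    rw [Real.arctan_add (by norm_num)]; norm_num
  have h13 : Real.arctan (12943/83760624) + Real.arctan (12943/83760624) = Real.arctan (2168227512864/7015841965348127) := by
    rw [Real.arctan_add (by norm_num)]; norm_num
  have h14 : Real.arctan (2168227512864/7015841965348127) + Real.arctan (2168227512864/7015841965348127) = Real.arctan (30423883150347294154261611456/49222033781529321716213016925633) := by
    rw [Real.arctan_add (by norm_num)]; norm_num
  have h15 : Real.arctan (30423883150347294154261611456/49222033781529321716213016925633) + Real.arctan (30423883150347294154261611456/49222033781529321716213016925633) = Real.arctan (2995050808383390473572029963981847462683592599627098985703296/2422807683977347792768192174502823109566996809458165133142010753) := by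
    rw [Real.arctan_add (by norm_num)]; norm_num
  have h16 : Real.arctan (2995050808383390473572029963981847462683592599627098985703296/2422807683977347792768192174502823109566996809458165133142010753) + Real.arctan (30423883150347294154261611456/49222033781529321716213016925633) = Real.arctan (221133709940734332763150066927029167927624324678877208263900879066152608081636777984094972736/119255430545806006606282910952047504082979247479672264764763875351796384053904855358653436772673) := by
    rw [Real.arctan_add (by norm_num)]; norm_num
  have h17 : Real.arctan (1/682) + Real.arctan (1/682) = Real.arctan (1364/465123) := by
    rw [Real.arctan_add (by norm_num)]; norm_num
  have h18 : Real.arctan (1364/465123) + Real.arctan (1364/465123) = Real.arctan (1268855544/216337544633) := by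
    rw [Real.arctan_add (by norm_num)]; norm_num
  have h19 : Real.arctan (1268855544/216337544633) + Real.arctan (1268855544/216337544633) = Real.arctan (549002185765858990704/46800323223443727568753) := by
    rw [Real.arctan_add (by norm_num)]; norm_num
  have h20 : Real.arctan (549002185765858990704/46800323223443727568753) + Real.arctan (1268855544/216337544633) = Real.arctan (178152634449794601186648817308264/10123970409723506716802717698789673) := by
    rw [Real.arctan_add (by norm_num)]; norm_num
  have h21 : Real.arctan (30359526048167280559520407768157953896794006114356905827076473489496336/31193467533294004448510308353153627192530554289520296713480255630772527) + Real.arctan (163063756196879/5565902965084799) = Real.arctan (174064700034847771243722223585567825134129389253870780153943085145809007457034316139697/168669275081066363616864208100506034804776275604892976659946692396520477346539869381729) := by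
    rw [Real.arctan_add (by norm_num)]; norm_num
  have h22 : Real.arctan (174064700034847771243722223585567825134129389253870780153943085145809007457034316139697/168669275081066363616864208100506034804776275604892976659946692396520477346539869381729) + Real.arctan (221133709940734332763150066927029167927624324678877208263900879066152608081636777984094972736/119255430545806006606282910952047504082979247479672264764763875351796384053904855358653436772673) = Real.arctan (10302123044173301317989366516097937/9945817775273712115616068881481409) := by
    rw [Real.arctan_add (by norm_num)]; norm_num
  have h23 : Real.arctan (10302123044173301317989366516097937/9945817775273712115616068881481409) + Real.arctan (-(178152634449794601186648817308264/10123970409723506716802717698789673)) = Real.arctan 1 := by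
    rw [Real.arctan_add (by norm_num)]; norm_num
  have hneg : Real.arctan (-(178152634449794601186648817308264/10123970409723506716802717698789673)) = -Real.arctan (178152634449794601186648817308264/10123970409723506716802717698789673) := Real.arctan_neg _
  have h1r : Real.arctan 1 = Real.pi/4 := Real.arctan_one
  linarith [h1, h2, h3, h4, h5, h6, h7, h8, h9, h10, h11, h12, h13, h14, h15, h16, h17, h18, h19, h20, h21, h22, h23, hneg, h1r]
end
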